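/- Let A be an ℝ-weighted automaton, let A^B be a backward WA of A with base B (where the columns of B form a basis of the backward space of A), and let A^{BF} be a forward WA of A^B with base F̃ (where the rows of F̃ form a basis of the forward space of A^B). Then the size of A^{BF} equals rank(L_A), the dimension of the linear span of the rows of the Hankel matrix of L_A. -/

import Mathlib

open Matrix

noncomputable section

/-- The matrix `M(w)` of a word: `M(ε) = I`, `M(a₁⋯a_k) = M(a₁)⋯M(a_k)`. -/
def wordProd {S : Type*} {Γ : Type*} [Fintype S] [DecidableEq S]
    (M : Γ → Matrix S S ℝ) (w : List Γ) : Matrix S S ℝ :=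
  (w.map M).prod

/-- The language of the weighted automaton `(M, α, η)`: `L(w) = α M(w) η`. -/
def WAlang {S : Type*} {Γ : Type*} [Fintype S] [DecidableEq S]
    (M : Γ → Matrix S S ℝ) (α η : S → ℝ) (w : List Γ) : ℝ :=
  α ⬝ᵥ (wordProd M w).mulVec η

/-- `(Mt, αt, ηt)` is a forward WA of `(M, α, η)` with base `F`. -/
def IsForwardWAOf {Γ : Type*} {n nh : ℕ}
    (M : Γ → Matrix (Fin n) (Fin n) ℝ) (α η : Fin n → ℝ)
    (Mt : Γ → Matrix (Fin nh) (Fin nh) ℝ) (αt ηt : Fin nh → ℝ)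
    (F : Matrix (Fin nh) (Fin n) ℝ) : Prop :=
  LinearIndependent ℝ (fun i => F i) ∧
  Submodule.span ℝ (Set.range (fun i => F i)) =
    Submodule.span ℝ {x : Fin n → ℝ | ∃ w : List Γ, x = Matrix.vecMul α (wordProd M w)} ∧
  (∀ a, F * M a = Mt a * F) ∧
  α = Matrix.vecMul αt F ∧
  ηt = F.mulVec η

/-- `(Mh, αh, ηh)` is a backward WA of `(M, α, η)` with base `B`. -/
def IsBackwardWAOf {Γ : Type*} {n nh : ℕ}
    (M : Γ → Matrix (Fin n) (Fin n) ℝ) (α η : Fin n → ℝ)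
    (Mh : Γ → Matrix (Fin nh) (Fin nh) ℝ) (αh ηh : Fin nh → ℝ)
    (B : Matrix (Fin n) (Fin nh) ℝ) : Prop :=
  LinearIndependent ℝ (fun j => Bᵀ j) ∧
  Submodule.span ℝ (Set.range (fun j => Bᵀ j)) =
    Submodule.span ℝ {x : Fin n → ℝ | ∃ w : List Γ, x = (wordProd M w).mulVec η} ∧
  (∀ a, M a * B = B * Mh a) ∧
  αh = Matrix.vecMul α B ∧
  η = B.mulVec ηh

/-!
Row `x` of the Hankel matrix of `L_A = L_{A^B}` is the image of the forward vector `αb Mb(x)` of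
`A^B` under the linear map `v ↦ (y ↦ v Mb(y) ηb)`. That map is injective because the backward
vectors of `A^B` span its whole state space, so the Hankel rows span a space isomorphic to the
forward space of `A^B`, whose dimension is the size of `A^{BF}`.
-/

universe u v w

theorem lift_rank_map_eq_of_injective {R : Type u} {M : Type v} {M' : Type w} [Ring R]
    [AddCommGroup M] [Module R M] [AddCommGroup M'] [Module R M'] {f : M →ₗ[R] M'} (hf : Function.Injective f)
    (p : Submodule R M) :
    Cardinal.lift.{v} (Module.rank R (p.map f)) = Cardinal.lift.{w} (Module.rank R p) :=
  (Submodule.equivMapOfInjective f hf p).lift_rank_eq.symm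

namespace WeightedAutomaton

variable {Γ S T : Type*} [Fintype S] [DecidableEq S] [Fintype T] [DecidableEq T]

def forwardSpace (M : Γ → Matrix S S ℝ) (α : S → ℝ) : Submodule ℝ (S → ℝ) :=
  Submodule.span ℝ {x | ∃ w : List Γ, x = Matrix.vecMul α (wordProd M w)}

def backwardSpace (M : Γ → Matrix S S ℝ) (η : S → ℝ) : Submodule ℝ (S → ℝ) :=
  Submodule.span ℝ {x | ∃ w : List Γ, x = (wordProd M w).mulVec η}

def langOfInitial (M : Γ → Matrix S S ℝ) (η : S → ℝ) : (S → ℝ) →ₗ[ℝ] (List Γ → ℝ) where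
  toFun v := WAlang M v η
  map_add' u v := by ext w; simp only [WAlang, add_dotProduct, Pi.add_apply]
  map_smul' c v := by ext w; simp only [WAlang, smul_dotProduct, Pi.smul_apply, RingHom.id_apply]

lemma wordProd_append (M : Γ → Matrix S S ℝ) (x y : List Γ) :
    wordProd M (x ++ y) = wordProd M x * wordProd M y := by
  simp [wordProd]

lemma wordProd_mul_of_intertwine {M : Γ → Matrix S S ℝ} {N : Γ → Matrix T T ℝ}
    {B : Matrix S T ℝ} (h : ∀ a, M a * B = B * N a) (w : List Γ) :
    wordProd M w * B = B * wordProd N w := by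
  induction w with
  | nil => simp [wordProd]
  | cons a w ih =>
    simp only [wordProd, List.map_cons, List.prod_cons] at ih ⊢
    rw [Matrix.mul_assoc, ih, ← Matrix.mul_assoc, h a, Matrix.mul_assoc]

lemma WAlang_append (M : Γ → Matrix S S ℝ) (α η : S → ℝ) (x y : List Γ) :
    WAlang M α η (x ++ y) = WAlang M (α ᵥ* wordProd M x) η y := by
  simp only [WAlang, wordProd_append, dotProduct_mulVec, vecMul_vecMul]

lemma WAlang_mulVec_of_intertwine {M : Γ → Matrix S S ℝ} {N : Γ → Matrix T T ℝ}
    {B : Matrix S T ℝ} (h : ∀ a, M a * B = B * N a) (α : S → ℝ) (ζ : T → ℝ) (w : List Γ) :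
    WAlang M α (B *ᵥ ζ) w = WAlang N (α ᵥ* B) ζ w := by
  simp only [WAlang, mulVec_mulVec, wordProd_mul_of_intertwine h, ← dotProduct_mulVec]

lemma map_backwardSpace_of_intertwine {M : Γ → Matrix S S ℝ} {N : Γ → Matrix T T ℝ}
    {B : Matrix S T ℝ} (h : ∀ a, M a * B = B * N a) (ζ : T → ℝ) :
    (backwardSpace N ζ).map B.mulVecLin = backwardSpace M (B *ᵥ ζ) := by
  rw [backwardSpace, Submodule.map_span]
  congr 1
  ext u
  simp only [Set.mem_image, Set.mem_ofPred_eq, mulVecLin_apply]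
  constructor
  · rintro ⟨_, ⟨w, rfl⟩, rfl⟩
    exact ⟨w, by rw [mulVec_mulVec, ← wordProd_mul_of_intertwine h, mulVec_mulVec]⟩
  · rintro ⟨w, rfl⟩
    exact ⟨_, ⟨w, rfl⟩, by rw [mulVec_mulVec, ← wordProd_mul_of_intertwine h, mulVec_mulVec]⟩

/-- `B` is injective and maps the backward vectors of `(Mb, ηb)` onto those of `(M, η)`, which span
the column space of `B`. -/
lemma backwardSpace_eq_top_of_isBackwardWAOf {n nb : ℕ} {M : Γ → Matrix (Fin n) (Fin n) ℝ}
    {α η : Fin n → ℝ} {Mb : Γ → Matrix (Fin nb) (Fin nb) ℝ} {αb ηb : Fin nb → ℝ}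
    {B : Matrix (Fin n) (Fin nb) ℝ} (hB : IsBackwardWAOf M α η Mb αb ηb B) :
    backwardSpace Mb ηb = ⊤ := by
  obtain ⟨hBind, hBspan, hBint, -, rfl⟩ := hB
  have hBinj : Function.Injective B.mulVecLin := Matrix.mulVec_injective_iff.mpr hBind
  apply Submodule.map_injective_of_injective hBinj
  rw [map_backwardSpace_of_intertwine hBint, Submodule.map_top, range_mulVecLin]
  exact hBspan.symm

lemma langOfInitial_injective {M : Γ → Matrix S S ℝ} {η : S → ℝ}
    (h : backwardSpace M η = ⊤) : Function.Injective (langOfInitial M η) := by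
  rw [← LinearMap.ker_eq_bot, LinearMap.ker_eq_bot']
  intro v hv
  have hperp : backwardSpace M η ≤ LinearMap.ker (dotProductBilin ℝ ℝ v) := by
    refine Submodule.span_le.mpr ?_
    rintro _ ⟨w, rfl⟩
    exact congrFun hv w
  rw [h] at hperp
  ext i
  simpa using hperp (Submodule.mem_top (x := Pi.single i 1))

lemma span_hankelRows_eq_map_forwardSpace (M : Γ → Matrix S S ℝ) (α η : S → ℝ) :
    Submodule.span ℝ (Set.range fun x y : List Γ => WAlang M α η (x ++ y)) =
      (forwardSpace M α).map (langOfInitial M η) := by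
  rw [forwardSpace, Submodule.map_span]
  congr 1
  ext f
  simp only [Set.mem_range, Set.mem_image, Set.mem_ofPred_eq]
  constructor
  · rintro ⟨x, rfl⟩
    exact ⟨_, ⟨x, rfl⟩, funext (WAlang_append M α η x · |>.symm)⟩
  · rintro ⟨_, ⟨x, rfl⟩, rfl⟩
    exact ⟨x, funext (WAlang_append M α η x)⟩

lemma rank_forwardSpace_of_isForwardWAOf {nb n' : ℕ} {Mb : Γ → Matrix (Fin nb) (Fin nb) ℝ}
    {αb ηb : Fin nb → ℝ} {M' : Γ → Matrix (Fin n') (Fin n') ℝ} {α' η' : Fin n' → ℝ}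
    {F : Matrix (Fin n') (Fin nb) ℝ} (hF : IsForwardWAOf Mb αb ηb M' α' η' F) :
    Module.rank ℝ (forwardSpace Mb αb) = n' := by
  obtain ⟨hFind, hFspan, -⟩ := hF
  rw [forwardSpace, ← hFspan, rank_span hFind,
    Cardinal.mk_range_eq _ hFind.injective, Cardinal.mk_fin]

end WeightedAutomaton

open WeightedAutomaton in
/-- the size of `A^{BF}` equals the rank of the Hankel matrix of `L_A`. -/
theorem size_BF_eq_hankel_rank {Γ : Type*} {n nb n' : ℕ}
    (M : Γ → Matrix (Fin n) (Fin n) ℝ) (α η : Fin n → ℝ)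
    (Mb : Γ → Matrix (Fin nb) (Fin nb) ℝ) (αb ηb : Fin nb → ℝ)
    (B : Matrix (Fin n) (Fin nb) ℝ)
    (M' : Γ → Matrix (Fin n') (Fin n') ℝ) (α' η' : Fin n' → ℝ)
    (F : Matrix (Fin n') (Fin nb) ℝ)
    (hB : IsBackwardWAOf M α η Mb αb ηb B)
    (hF : IsForwardWAOf Mb αb ηb M' α' η' F) :
    (n' : Cardinal) =
      Module.rank ℝ
        ↥(Submodule.span ℝ
          (Set.range (fun x : List Γ => fun y : List Γ => WAlang M α η (x ++ y)))) := by
  have hlang : WAlang M α η = WAlang Mb αb ηb := by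
    obtain ⟨-, -, hBint, rfl, rfl⟩ := hB
    exact funext (WAlang_mulVec_of_intertwine hBint α ηb)
  have hrank := lift_rank_map_eq_of_injective
    (langOfInitial_injective (backwardSpace_eq_top_of_isBackwardWAOf hB)) (forwardSpace Mb αb)
  rw [rank_forwardSpace_of_isForwardWAOf hF, Cardinal.lift_natCast] at hrank
  rw [hlang, span_hankelRows_eq_map_forwardSpace]
  simpa using hrank.symm
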